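/- For all integers b ≥ 3 and w ≥ 1, one has k(b,w) ≤ b^w. -/

import Mathlib

/-!
Splitting off the first component gives `k(b + 1, w) = ∑ⱼ p(j) k(b, w - j)`, and `p(j)` is at most
the number `q(j) = 2 ^ (j - 1)` of compositions of `j`. Hence `k(b, w)` is at most the number of
`b`-tuples of compositions of total size `w`, the `b`-fold convolution power of `q`.
Since `∑ q(n) xⁿ = (1 - x) / (1 - 2x)`, convolution with `q` satisfies
`(q ⋆ a)(w + 1) + a(w) = 2 (q ⋆ a)(w) + a(w + 1)`, so `(q ⋆ a)(w) ≤ cʷ` as soon as `a(0) ≤ 1` and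
the increments of `a` are at most `(c - 2) cʷ`. This carries the bound `bʷ` from `b` to `b + 1`
for `b ≥ 1`, and an explicit formula for `q ⋆ q` gives the case `b = 3`.
-/

/-- `multipartitions b w` is the number of `b`-multipartitions of `w`, i.e. the
number of `b`-tuples `(λ₁, …, λ_b)` of integer partitions with `|λ₁| + ⋯ + |λ_b| = w`. -/
noncomputable def multipartitions (b w : ℕ) : ℕ :=
  Nat.card {f : Fin b → Σ n : ℕ, n.Partition // (∑ i, (f i).1) = w}

open Finset

abbrev Multipartition (b w : ℕ) := {f : Fin b → Σ n : ℕ, n.Partition // (∑ i, (f i).1) = w}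

def Multipartition.consEquiv (b w : ℕ) :
    Multipartition (b + 1) w ≃
      Σ j : Fin (w + 1), (j : ℕ).Partition × Multipartition b (w - j) where
  toFun f :=
    have hsum := f.2
    ⟨⟨(f.1 0).1, by rw [Fin.sum_univ_succ] at hsum; omega⟩, (f.1 0).2,
      ⟨Fin.tail f.1, by rw [Fin.sum_univ_succ] at hsum; simp only [Fin.tail]; omega⟩⟩
  invFun x := ⟨Fin.cons ⟨x.1, x.2.1⟩ x.2.2.1, by
    rw [Fin.sum_univ_succ]; simp only [Fin.cons_zero, Fin.cons_succ]; rw [x.2.2.2]; omega⟩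
  left_inv f := Subtype.ext (Fin.cons_self_tail f.1)
  right_inv _ := rfl

instance Multipartition.finite : ∀ b w, Finite (Multipartition b w)
  | 0, _ => inferInstance
  | b + 1, w =>
    have := fun v => Multipartition.finite b v
    .of_equiv _ (Multipartition.consEquiv b w).symm

theorem multipartitions_zero_left (w : ℕ) : multipartitions 0 w = if w = 0 then 1 else 0 := by
  split_ifs with h <;> simp [multipartitions, h, eq_comm]

theorem multipartitions_succ_left (b w : ℕ) :
    multipartitions (b + 1) w =
      ∑ j ∈ range (w + 1), Fintype.card j.Partition * multipartitions b (w - j) := by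
  rw [multipartitions, Nat.card_congr (Multipartition.consEquiv b w), Nat.card_sigma,
    ← Fin.sum_univ_eq_sum_range (fun j => Fintype.card j.Partition * multipartitions b (w - j))]
  simp only [Nat.card_prod, Nat.card_eq_fintype_card]
  rfl

theorem Nat.Partition.card_le_two_pow (n : ℕ) : Fintype.card n.Partition ≤ 2 ^ (n - 1) :=
  composition_card n ▸ Fintype.card_le_of_surjective _ Nat.Partition.ofComposition_surj

/-- Convolution with `n ↦ 2 ^ (n - 1)`, the number of compositions of `n`; at `n = 0` the
truncated subtraction gives `2 ^ 0 = 1`, again the number of compositions. -/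
def compositionConv (a : ℕ → ℕ) (w : ℕ) : ℕ :=
  ∑ j ∈ range (w + 1), 2 ^ (j - 1) * a (w - j)

theorem compositionConv_succ_add (a : ℕ → ℕ) (w : ℕ) :
    compositionConv a (w + 1) + a w = 2 * compositionConv a w + a (w + 1) := by
  have h1 : compositionConv a (w + 1) = ∑ j ∈ range (w + 1), 2 ^ j * a (w - j) + a (w + 1) := by
    simp [compositionConv, sum_range_succ' _ (w + 1)]
  have h2 : 2 * compositionConv a w = ∑ j ∈ range (w + 1), 2 ^ j * a (w - j) + a w := by
    rw [compositionConv, sum_range_succ', sum_range_succ', mul_add, mul_sum]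
    simp only [add_tsub_cancel_right, zero_tsub, tsub_zero, pow_zero, pow_succ', mul_assoc]
    ring
  omega

theorem compositionConv_zero (a : ℕ → ℕ) : compositionConv a 0 = a 0 := by
  simp [compositionConv]

theorem compositionConv_mono {a a' : ℕ → ℕ} (h : a ≤ a') :
    compositionConv a ≤ compositionConv a' :=
  fun _ => sum_le_sum fun _ _ => Nat.mul_le_mul_left _ (h _)

theorem compositionConv_le_pow {a : ℕ → ℕ} {b : ℕ} (h0 : a 0 ≤ 1)
    (hsucc : ∀ w, a (w + 1) + 2 * b ^ w ≤ a w + b ^ (w + 1)) (w : ℕ) :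
    compositionConv a w ≤ b ^ w := by
  induction w with
  | zero => simpa [compositionConv_zero] using h0
  | succ w ih =>
    have := compositionConv_succ_add a w
    have := hsucc w
    omega

theorem compositionConv_pow_le {b : ℕ} (hb : 1 ≤ b) (w : ℕ) :
    compositionConv (b ^ ·) w ≤ (b + 1) ^ w := by
  refine compositionConv_le_pow (by simp) (fun v => ?_) w
  have := Nat.mul_le_mul_left (b - 1) (Nat.pow_le_pow_left (Nat.le_succ b) v)
  obtain ⟨c, rfl⟩ := Nat.exists_eq_add_of_le' hb
  simp only [pow_succ, add_tsub_cancel_right] at this ⊢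
  nlinarith

def multicompositions : ℕ → ℕ → ℕ
  | 0 => fun w => if w = 0 then 1 else 0
  | b + 1 => compositionConv (multicompositions b)

theorem multicompositions_zero_right (b : ℕ) : multicompositions b 0 = 1 := by
  induction b with
  | zero => rfl
  | succ b ih => rw [multicompositions, compositionConv_zero, ih]

theorem multicompositions_one (w : ℕ) : multicompositions 1 w = 2 ^ (w - 1) := by
  rw [multicompositions, compositionConv, sum_eq_single_of_mem w (self_mem_range_succ w)]
  · simp [multicompositions]
  · intro j hj hjw
    have : w - j ≠ 0 := by rw [mem_range] at hj; omega
    simp [multicompositions, this]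

theorem four_mul_multicompositions_two_succ (w : ℕ) :
    4 * multicompositions 2 (w + 1) = (w + 4) * 2 ^ (w + 1) := by
  have hrec (v : ℕ) :
      multicompositions 2 (v + 1) + 2 ^ (v - 1) = 2 * multicompositions 2 v + 2 ^ v := by
    have := compositionConv_succ_add (multicompositions 1) v
    simp only [multicompositions_one, add_tsub_cancel_right] at this
    exact this
  induction w with
  | zero => decide
  | succ w ih =>
    have := hrec (w + 1)
    simp only [add_tsub_cancel_right, pow_succ] at this ih ⊢
    nlinarith

theorem multicompositions_two_succ_le (w : ℕ) :
    multicompositions 2 (w + 1) ≤ multicompositions 2 w + 3 ^ w := by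
  have key (v : ℕ) : (v + 6) * 2 ^ v ≤ 6 * 3 ^ v := by
    induction v with
    | zero => simp
    | succ v ih =>
      rw [pow_succ, pow_succ]
      linarith [Nat.zero_le (v * 2 ^ v), Nat.zero_le (2 ^ v)]
  rcases w with _ | w
  · decide
  · have h1 := four_mul_multicompositions_two_succ w
    have h2 := four_mul_multicompositions_two_succ (w + 1)
    have := key w
    simp only [pow_succ] at h1 h2 ⊢
    nlinarith

theorem multicompositions_three_le (w : ℕ) : multicompositions 3 w ≤ 3 ^ w :=
  compositionConv_le_pow (a := multicompositions 2) (by decide) (fun v => by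
    have := multicompositions_two_succ_le v; rw [pow_succ]; omega) w

theorem multicompositions_le_pow {b : ℕ} (hb : 3 ≤ b) (w : ℕ) :
    multicompositions b w ≤ b ^ w := by
  induction b, hb using Nat.le_induction generalizing w with
  | base => exact multicompositions_three_le w
  | succ b _ ih =>
    exact (compositionConv_mono (fun v => ih v) w).trans (compositionConv_pow_le (by omega) w)

theorem multipartitions_le_multicompositions (b w : ℕ) :
    multipartitions b w ≤ multicompositions b w := by
  induction b generalizing w with
  | zero => exact (multipartitions_zero_left w).le
  | succ b ih =>
    rw [multipartitions_succ_left]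
    exact sum_le_sum fun j _ => Nat.mul_le_mul (Nat.Partition.card_le_two_pow j) (ih _)

theorem multipartitions_le_pow (b w : ℕ) (hb : 3 ≤ b) :
    multipartitions b w ≤ b ^ w :=
  (multipartitions_le_multicompositions b w).trans (multicompositions_le_pow hb w)
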